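/- arXiv:2409.07215 — 4 statements merged into one kernel-verified Lean document; each statement's English description precedes it below -/
import Mathlib

section
/- Let n₀, n, d be natural numbers, c > 0 and M ≥ 0 real numbers. Let X₀ be a real n₀ × d matrix and set E = X₀ᵀX₀ + c·I_d. Define f(X) = log det(XᵀX + E) for real n × d matrices X. If X and X′ are real n × d matrices that agree on all rows except possibly one row index i₀, and the differing rows satisfy |X_{i₀ j} − X′_{i₀ j}| ≤ M for every column j, then |f(X′) − f(X)| ≤ M·d/√c. -/
open Matrix


private lemma aux_deriv (x : ℝ) :
    HasDerivAt (fun y : ℝ => y - Real.log (1 + y^2)) (1 - 2*x/(1+x^2)) x := by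
  have h1 : HasDerivAt (fun y : ℝ => 1 + y^2) (2*x) x := by
    simpa using (hasDerivAt_pow 2 x).const_add 1
  have hpos : (0:ℝ) < 1 + x^2 := by positivity
  have h2 : HasDerivAt (fun y : ℝ => Real.log (1 + y^2)) (2*x/(1+x^2)) x := by
    have := (Real.hasDerivAt_log hpos.ne').comp x h1
    exact h1.log hpos.ne'
  exact (hasDerivAt_id' x).sub h2

private lemma aux_mono {t s : ℝ} (ht : 0 ≤ t) (hts : t ≤ s) :
    Real.log (1 + s^2) - Real.log (1 + t^2) ≤ s - t := by
  have hmono : Monotone (fun y : ℝ => y - Real.log (1 + y^2)) := by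
    apply monotone_of_deriv_nonneg
    · exact fun x => (aux_deriv x).differentiableAt
    · intro x
      rw [(aux_deriv x).deriv]
      have hpos : (0:ℝ) < 1 + x^2 := by positivity
      have : 2*x/(1+x^2) ≤ 1 := by
        rw [div_le_one hpos]; nlinarith [sq_nonneg (x-1)]
      linarith
  have := hmono hts
  simp only at this
  linarith

private lemma aux_log {a b : ℝ} (ha : 0 ≤ a) (hb : 0 ≤ b) :
    |Real.log (1+b) - Real.log (1+a)| ≤ |Real.sqrt b - Real.sqrt a| := by
  have ea : 1 + a = 1 + (Real.sqrt a)^2 := by rw [Real.sq_sqrt ha]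
  have eb : 1 + b = 1 + (Real.sqrt b)^2 := by rw [Real.sq_sqrt hb]
  rcases le_total a b with h | h
  · have hs : Real.sqrt a ≤ Real.sqrt b := Real.sqrt_le_sqrt h
    have h1 : Real.log (1+a) ≤ Real.log (1+b) :=
      Real.log_le_log (by positivity) (by linarith)
    rw [abs_of_nonneg (by linarith), abs_of_nonneg (by linarith)]
    rw [ea, eb]
    exact aux_mono (Real.sqrt_nonneg a) hs
  · have hs : Real.sqrt b ≤ Real.sqrt a := Real.sqrt_le_sqrt h
    have h1 : Real.log (1+b) ≤ Real.log (1+a) :=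
      Real.log_le_log (by positivity) (by linarith)
    rw [abs_of_nonpos (by linarith), abs_of_nonpos (by linarith)]
    rw [ea, eb]
    have := aux_mono (Real.sqrt_nonneg b) hs
    linarith


private lemma aux_cs {d : ℕ} {P : Matrix (Fin d) (Fin d) ℝ} (hP : P.PosSemidef)
    (x y : Fin d → ℝ) :
    (x ⬝ᵥ (P *ᵥ y))^2 ≤ (x ⬝ᵥ (P *ᵥ x)) * (y ⬝ᵥ (P *ᵥ y)) := by
  have hPt : Pᵀ = P := by
    have := hP.isHermitian
    rwa [IsHermitian, conjTranspose_eq_transpose_of_trivial] at this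
  have hsym : y ⬝ᵥ (P *ᵥ x) = x ⬝ᵥ (P *ᵥ y) := by
    rw [dotProduct_mulVec, ← mulVec_transpose, hPt, dotProduct_comm]
  have hq : ∀ z : Fin d → ℝ, 0 ≤ z ⬝ᵥ (P *ᵥ z) := fun z => by simpa using hP.dotProduct_mulVec_nonneg z
  have key : ∀ t : ℝ,
      0 ≤ (y ⬝ᵥ (P *ᵥ y)) * (t * t) + (2 * (x ⬝ᵥ (P *ᵥ y))) * t + (x ⬝ᵥ (P *ᵥ x)) := by
    intro t
    have := hq (t • y + x)
    simp only [mulVec_add, mulVec_smul, dotProduct_add, add_dotProduct,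
      dotProduct_smul, smul_dotProduct, smul_eq_mul] at this
    rw [hsym] at this
    nlinarith [this]
  have hd := discrim_le_zero key
  rw [discrim] at hd
  nlinarith [hd]

private lemma aux_bound {d : ℕ} {B : Matrix (Fin d) (Fin d) ℝ} (hB : B.PosDef) {c : ℝ}
    (hc : 0 < c) (hcB : (B - c • 1).PosSemidef) (x : Fin d → ℝ) :
    x ⬝ᵥ (B⁻¹ *ᵥ x) ≤ (x ⬝ᵥ x) / c := by
  set y := B⁻¹ *ᵥ x with hy
  have hdet : IsUnit B.det := isUnit_iff_ne_zero.mpr hB.det_pos.ne'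
  have hxy : B *ᵥ y = x := by
    rw [hy, mulVec_mulVec, Matrix.mul_nonsing_inv _ hdet, one_mulVec]
  have hr : x ⬝ᵥ y = y ⬝ᵥ (B *ᵥ y) := by
    conv_lhs => rw [← hxy]
    rw [dotProduct_comm]
  have hyy : 0 ≤ y ⬝ᵥ y := Finset.sum_nonneg fun i _ => mul_self_nonneg _
  have hxx : 0 ≤ x ⬝ᵥ x := Finset.sum_nonneg fun i _ => mul_self_nonneg _
  have h1 : c * (y ⬝ᵥ y) ≤ x ⬝ᵥ y := by
    have := hcB.dotProduct_mulVec_nonneg y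
    simp only [star_trivial, sub_mulVec, dotProduct_sub, smul_mulVec,
      dotProduct_smul, smul_eq_mul, one_mulVec] at this
    rw [hr]; linarith
  have h0 : 0 ≤ x ⬝ᵥ y := le_trans (by positivity) h1
  have h2 : (x ⬝ᵥ y)^2 ≤ (x ⬝ᵥ x) * (y ⬝ᵥ y) := by
    simpa [one_mulVec] using aux_cs (Matrix.PosSemidef.one (n := Fin d) (R := ℝ)) x y
  rw [le_div_iff₀ hc]
  rcases eq_or_lt_of_le h0 with h | h
  · rw [← h, zero_mul]; exact hxx
  · have key : (x ⬝ᵥ y) * c * (x ⬝ᵥ y) ≤ (x ⬝ᵥ x) * (x ⬝ᵥ y) := by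
      calc (x ⬝ᵥ y) * c * (x ⬝ᵥ y) = c * (x ⬝ᵥ y)^2 := by ring
        _ ≤ c * ((x ⬝ᵥ x) * (y ⬝ᵥ y)) := mul_le_mul_of_nonneg_left h2 hc.le
        _ = (x ⬝ᵥ x) * (c * (y ⬝ᵥ y)) := by ring
        _ ≤ (x ⬝ᵥ x) * (x ⬝ᵥ y) := mul_le_mul_of_nonneg_left h1 hxx
    exact le_of_mul_le_mul_right key h

private lemma aux_tri {d : ℕ} {P : Matrix (Fin d) (Fin d) ℝ} (hP : P.PosSemidef)
    (x y : Fin d → ℝ) :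
    Real.sqrt ((x + y) ⬝ᵥ (P *ᵥ (x + y))) ≤
      Real.sqrt (x ⬝ᵥ (P *ᵥ x)) + Real.sqrt (y ⬝ᵥ (P *ᵥ y)) := by
  have hq : ∀ z : Fin d → ℝ, 0 ≤ z ⬝ᵥ (P *ᵥ z) := fun z => by simpa using hP.dotProduct_mulVec_nonneg z
  have hPt : Pᵀ = P := by
    have := hP.isHermitian
    rwa [IsHermitian, conjTranspose_eq_transpose_of_trivial] at this
  have hsym : y ⬝ᵥ (P *ᵥ x) = x ⬝ᵥ (P *ᵥ y) := by
    rw [dotProduct_mulVec, ← mulVec_transpose, hPt, dotProduct_comm]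
  have hm : x ⬝ᵥ (P *ᵥ y) ≤ Real.sqrt (x ⬝ᵥ (P *ᵥ x)) * Real.sqrt (y ⬝ᵥ (P *ᵥ y)) := by
    have h1 := aux_cs hP x y
    have h2 : x ⬝ᵥ (P *ᵥ y) ≤ |x ⬝ᵥ (P *ᵥ y)| := le_abs_self _
    have h3 : |x ⬝ᵥ (P *ᵥ y)| = Real.sqrt ((x ⬝ᵥ (P *ᵥ y))^2) := (Real.sqrt_sq_eq_abs _).symm
    rw [← Real.sqrt_mul (hq x)]
    calc x ⬝ᵥ (P *ᵥ y) ≤ Real.sqrt ((x ⬝ᵥ (P *ᵥ y))^2) := by rw [← h3]; exact h2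
      _ ≤ Real.sqrt ((x ⬝ᵥ (P *ᵥ x)) * (y ⬝ᵥ (P *ᵥ y))) := Real.sqrt_le_sqrt h1
  have expand : (x + y) ⬝ᵥ (P *ᵥ (x + y)) =
      (x ⬝ᵥ (P *ᵥ x)) + 2 * (x ⬝ᵥ (P *ᵥ y)) + (y ⬝ᵥ (P *ᵥ y)) := by
    simp only [mulVec_add, dotProduct_add, add_dotProduct]
    rw [hsym]; ring
  rw [expand]
  have : (x ⬝ᵥ (P *ᵥ x)) + 2 * (x ⬝ᵥ (P *ᵥ y)) + (y ⬝ᵥ (P *ᵥ y)) ≤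
      (Real.sqrt (x ⬝ᵥ (P *ᵥ x)) + Real.sqrt (y ⬝ᵥ (P *ᵥ y)))^2 := by
    have sx := Real.sq_sqrt (hq x)
    have sy := Real.sq_sqrt (hq y)
    nlinarith [hm]
  calc Real.sqrt _ ≤ Real.sqrt ((Real.sqrt (x ⬝ᵥ (P *ᵥ x)) + Real.sqrt (y ⬝ᵥ (P *ᵥ y)))^2) :=
        Real.sqrt_le_sqrt this
    _ = _ := Real.sqrt_sq (by positivity)

/-- Sensitivity of the log-determinant statistic `f(X) = log det (XᵀX + X₀ᵀX₀ + c I)`: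
if `X` and `X'` differ in at most one row, and the entries of the differing row differ
by at most `M`, then `|f(X') - f(X)| ≤ M d / √c`. -/
theorem logdet_sensitivity {n₀ n d : ℕ} (c M : ℝ) (hc : 0 < c) (hM : 0 ≤ M)
    (X₀ : Matrix (Fin n₀) (Fin d) ℝ) (X X' : Matrix (Fin n) (Fin d) ℝ) (i₀ : Fin n)
    (hrows : ∀ i : Fin n, i ≠ i₀ → ∀ j : Fin d, X i j = X' i j)
    (hdiff : ∀ j : Fin d, |X i₀ j - X' i₀ j| ≤ M) :
    |Real.log ((X'ᵀ * X' + (X₀ᵀ * X₀ + c • (1 : Matrix (Fin d) (Fin d) ℝ))).det) -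
        Real.log ((Xᵀ * X + (X₀ᵀ * X₀ + c • (1 : Matrix (Fin d) (Fin d) ℝ))).det)| ≤
      M * d / Real.sqrt c := by
  classical
  set E : Matrix (Fin d) (Fin d) ℝ := X₀ᵀ * X₀ + c • 1 with hE_def
  set u : Fin d → ℝ := X i₀ with hu_def
  set v : Fin d → ℝ := X' i₀ with hv_def
  set S : Matrix (Fin d) (Fin d) ℝ :=
    ∑ i ∈ Finset.univ.erase i₀, replicateCol (Fin 1) (X i) * replicateRow (Fin 1) (X i) with hS_def
  set B : Matrix (Fin d) (Fin d) ℝ := S + E with hB_def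
  -- positivity facts
  have hrank1 : ∀ w : Fin d → ℝ, (replicateCol (Fin 1) w * replicateRow (Fin 1) w).PosSemidef := by
    intro w
    have := posSemidef_conjTranspose_mul_self (replicateRow (Fin 1) w)
    simpa using this
  have hS : S.PosSemidef := by
    rw [hS_def]
    exact Finset.sum_induction _ _ (fun A B hA hB => hA.add hB) Matrix.PosSemidef.zero
      (fun i _ => hrank1 _)
  have hX₀ : (X₀ᵀ * X₀).PosSemidef := by
    have := posSemidef_conjTranspose_mul_self X₀
    rwa [conjTranspose_eq_transpose_of_trivial] at this
  have hcI : (c • (1 : Matrix (Fin d) (Fin d) ℝ)).PosDef := by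
    have : c • (1 : Matrix (Fin d) (Fin d) ℝ) = Matrix.diagonal (fun _ => c) := by
      ext i j
      rcases eq_or_ne i j with h | h <;>
        simp [Matrix.one_apply, Matrix.diagonal_apply, h]
    rw [this]
    exact Matrix.PosDef.diagonal fun _ => hc
  have hE : E.PosDef := Matrix.PosDef.posSemidef_add hX₀ hcI
  have hB : B.PosDef := Matrix.PosDef.posSemidef_add hS hE
  have hBdet : IsUnit B.det := isUnit_iff_ne_zero.mpr hB.det_pos.ne'
  have hBinv : B⁻¹.PosSemidef := hB.inv.posSemidef
  have hq : ∀ z : Fin d → ℝ, 0 ≤ z ⬝ᵥ (B⁻¹ *ᵥ z) := fun z => by simpa using hBinv.dotProduct_mulVec_nonneg z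
  -- decompositions
  have entry : ∀ (w : Fin d → ℝ) j k, (replicateCol (Fin 1) w * replicateRow (Fin 1) w) j k = w j * w k := by
    intro w j k; simp [Matrix.mul_apply]
  have hSapp : ∀ j k, S j k = ∑ i ∈ Finset.univ.erase i₀, X i j * X i k := by
    intro j k
    rw [hS_def, Matrix.sum_apply]
    exact Finset.sum_congr rfl fun i _ => entry _ _ _
  have hXdec : Xᵀ * X + E = B + replicateCol (Fin 1) u * replicateRow (Fin 1) u := by
    ext j k
    simp only [Matrix.add_apply, hB_def]
    rw [entry, hSapp]
    have hXX : (Xᵀ * X) j k = ∑ i, X i j * X i k := by simp [Matrix.mul_apply]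
    rw [hXX, ← Finset.sum_erase_add Finset.univ _ (Finset.mem_univ i₀)]
    rw [hu_def]; ring
  have hX'dec : X'ᵀ * X' + E = B + replicateCol (Fin 1) v * replicateRow (Fin 1) v := by
    ext j k
    simp only [Matrix.add_apply, hB_def]
    rw [entry, hSapp]
    have hXX : (X'ᵀ * X') j k = ∑ i, X' i j * X' i k := by simp [Matrix.mul_apply]
    rw [hXX, ← Finset.sum_erase_add Finset.univ _ (Finset.mem_univ i₀)]
    have hsum : ∑ i ∈ Finset.univ.erase i₀, X' i j * X' i k
        = ∑ i ∈ Finset.univ.erase i₀, X i j * X i k := by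
      refine Finset.sum_congr rfl fun i hi => ?_
      have hne := Finset.ne_of_mem_erase hi
      rw [hrows i hne j, hrows i hne k]
    rw [hsum, hv_def]; ring
  -- determinant lemma
  have hdet1 : ∀ w : Fin d → ℝ,
      (B + replicateCol (Fin 1) w * replicateRow (Fin 1) w).det = B.det * (1 + w ⬝ᵥ (B⁻¹ *ᵥ w)) := by
    intro w
    refine (Matrix.det_add_replicateCol_mul_replicateRow (ι := Fin 1) hBdet w w).trans ?_
    congr 1
    rw [Matrix.mul_assoc, ← Matrix.replicateCol_mulVec]
    simp [Matrix.det_unique, Matrix.add_apply, Matrix.one_apply]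
  -- nonnegativity of quadratic forms
  have ha : 0 ≤ u ⬝ᵥ (B⁻¹ *ᵥ u) := hq u
  have hb : 0 ≤ v ⬝ᵥ (B⁻¹ *ᵥ v) := hq v
  have h1b : (0:ℝ) < 1 + v ⬝ᵥ (B⁻¹ *ᵥ v) := by linarith
  have h1a : (0:ℝ) < 1 + u ⬝ᵥ (B⁻¹ *ᵥ u) := by linarith
  rw [hX'dec, hXdec, hdet1 v, hdet1 u,
    Real.log_mul hB.det_pos.ne' h1b.ne', Real.log_mul hB.det_pos.ne' h1a.ne']
  have hsimp : Real.log B.det + Real.log (1 + v ⬝ᵥ (B⁻¹ *ᵥ v)) -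
      (Real.log B.det + Real.log (1 + u ⬝ᵥ (B⁻¹ *ᵥ u))) =
      Real.log (1 + v ⬝ᵥ (B⁻¹ *ᵥ v)) - Real.log (1 + u ⬝ᵥ (B⁻¹ *ᵥ u)) := by ring
  rw [hsimp]
  set w : ℝ := (v - u) ⬝ᵥ (B⁻¹ *ᵥ (v - u)) with hw_def
  have hw0 : 0 ≤ w := hq _
  have hcB : (B - c • 1).PosSemidef := by
    have hBe : B - c • (1 : Matrix (Fin d) (Fin d) ℝ) = S + X₀ᵀ * X₀ := by
      rw [hB_def, hE_def]; abel
    rw [hBe]; exact hS.add hX₀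
  have hwb : w ≤ ((v - u) ⬝ᵥ (v - u)) / c := aux_bound hB hc hcB _
  have hvu : (v - u) ⬝ᵥ (v - u) ≤ (d : ℝ) * M ^ 2 := by
    rw [dotProduct]
    calc ∑ j, (v - u) j * (v - u) j ≤ ∑ _j : Fin d, M ^ 2 := by
          refine Finset.sum_le_sum fun j _ => ?_
          have h' := abs_le.mp (hdiff j)
          simp only [Pi.sub_apply]
          nlinarith [h'.1, h'.2]
      _ = (d : ℝ) * M ^ 2 := by
          simp [Finset.sum_const, Finset.card_univ, nsmul_eq_mul]
  have hsq : w ≤ (M * d / Real.sqrt c) ^ 2 := by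
    have e : (M * (d:ℝ) / Real.sqrt c) ^ 2 = M ^ 2 * (d:ℝ) ^ 2 / c := by
      rw [div_pow, Real.sq_sqrt hc.le]; ring
    have hd2 : (d : ℝ) ≤ (d : ℝ) ^ 2 := by
      exact_mod_cast Nat.le_self_pow (by norm_num : (2:ℕ) ≠ 0) d
    calc w ≤ ((v - u) ⬝ᵥ (v - u)) / c := hwb
      _ ≤ ((d:ℝ) * M ^ 2) / c := by gcongr
      _ ≤ (M ^ 2 * (d:ℝ) ^ 2) / c := by
          have hnum : (d:ℝ) * M ^ 2 ≤ M ^ 2 * (d:ℝ) ^ 2 := by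
            nlinarith [hd2, sq_nonneg M, Nat.cast_nonneg (α := ℝ) d]
          exact div_le_div_of_nonneg_right hnum hc.le
      _ = _ := e.symm
  have hsw : Real.sqrt w ≤ M * d / Real.sqrt c := by
    have hs := Real.sqrt_le_sqrt hsq
    rwa [Real.sqrt_sq (by positivity)] at hs
  have hvsum : v - u + u = v := by abel
  have husum : u - v + v = u := by abel
  have tri1 : Real.sqrt (v ⬝ᵥ (B⁻¹ *ᵥ v)) ≤ Real.sqrt w + Real.sqrt (u ⬝ᵥ (B⁻¹ *ᵥ u)) := by
    have h := aux_tri hBinv (v - u) u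
    rwa [hvsum] at h
  have hqsym : (u - v) ⬝ᵥ (B⁻¹ *ᵥ (u - v)) = w := by
    rw [hw_def, show u - v = -(v - u) from (neg_sub v u).symm, mulVec_neg,
      dotProduct_neg, neg_dotProduct, neg_neg]
  have tri2 : Real.sqrt (u ⬝ᵥ (B⁻¹ *ᵥ u)) ≤ Real.sqrt w + Real.sqrt (v ⬝ᵥ (B⁻¹ *ᵥ v)) := by
    have h := aux_tri hBinv (u - v) v
    rw [husum, hqsym] at h
    exact h
  calc |Real.log (1 + v ⬝ᵥ (B⁻¹ *ᵥ v)) - Real.log (1 + u ⬝ᵥ (B⁻¹ *ᵥ u))|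
      ≤ |Real.sqrt (v ⬝ᵥ (B⁻¹ *ᵥ v)) - Real.sqrt (u ⬝ᵥ (B⁻¹ *ᵥ u))| := aux_log ha hb
    _ ≤ Real.sqrt w := by
        rw [abs_sub_le_iff]
        constructor <;> linarith
    _ ≤ M * d / Real.sqrt c := hsw
end

section
/- Let c > 0, let E be a real symmetric d × d matrix such that E − c·I_d is positive semidefinite, and let X be any real n × d matrix. Then the Frobenius norm of (XᵀX + E)⁻¹Xᵀ satisfies ‖(XᵀX + E)⁻¹Xᵀ‖_F ≤ √(d/c). -/
open Matrix

private lemma psd_trace_nonneg {m : ℕ} {A : Matrix (Fin m) (Fin m) ℝ}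
    (hA : A.PosSemidef) : 0 ≤ A.trace := by
  have h : ∀ i, 0 ≤ A i i := fun i => by
    exact hA.diag_nonneg
  exact Finset.sum_nonneg fun i _ => h i

private lemma psd_smul {m : ℕ} {A : Matrix (Fin m) (Fin m) ℝ}
    (hA : A.PosSemidef) {r : ℝ} (hr : 0 ≤ r) : (r • A).PosSemidef := by
  have hs : Aᵀ = A := by
    simpa [conjTranspose_eq_transpose_of_trivial] using hA.1.eq
  refine ⟨?_, fun x => ?_⟩
  · simp [Matrix.IsHermitian, conjTranspose_smul,
      conjTranspose_eq_transpose_of_trivial, hs]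
  · exact (hA.smul hr).2 x

/-- Frobenius-norm bound: if `E` is symmetric with `E - c I` positive semidefinite
(`c > 0`), then `‖(XᵀX + E)⁻¹ Xᵀ‖_F ≤ √(d/c)`, where the Frobenius norm of `A`
is `√(trace (Aᵀ A))`. -/
theorem frobenius_norm_inv_mul_transpose_le {n d : ℕ} (c : ℝ) (hc : 0 < c)
    (E : Matrix (Fin d) (Fin d) ℝ) (hEsymm : E.IsSymm)
    (hE : (E - c • (1 : Matrix (Fin d) (Fin d) ℝ)).PosSemidef)
    (X : Matrix (Fin n) (Fin d) ℝ) :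
    Real.sqrt (Matrix.trace (((Xᵀ * X + E)⁻¹ * Xᵀ)ᵀ * ((Xᵀ * X + E)⁻¹ * Xᵀ))) ≤
      Real.sqrt ((d : ℝ) / c) := by
  apply Real.sqrt_le_sqrt
  set M : Matrix (Fin d) (Fin d) ℝ := Xᵀ * X + E with hMdef
  have hc0 : c ≠ 0 := ne_of_gt hc
  -- basic positivity facts
  have hXX : (Xᵀ * X).PosSemidef := by
    have := posSemidef_conjTranspose_mul_self X
    simpa [conjTranspose_eq_transpose_of_trivial] using this
  have hcI : (c • (1 : Matrix (Fin d) (Fin d) ℝ)).PosDef := by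
    rw [smul_one_eq_diagonal]
    exact posDef_diagonal_iff.mpr fun _ => hc
  have hEpos : E.PosDef := by
    have h := Matrix.PosDef.posSemidef_add hE hcI
    simpa using h
  have hM : M.PosDef := Matrix.PosDef.posSemidef_add hXX hEpos
  have hMunit : IsUnit M.det := isUnit_iff_isUnit_det _ |>.1 hM.isUnit
  have hMinv : M⁻¹ * M = 1 := nonsing_inv_mul M hMunit
  have hMinv' : M * M⁻¹ = 1 := mul_nonsing_inv M hMunit
  have hMsymm : Mᵀ = M := by
    have := hM.isHermitian.eq
    simpa [conjTranspose_eq_transpose_of_trivial] using this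
  have hMinvSymm : (M⁻¹)ᵀ = M⁻¹ := by rw [transpose_nonsing_inv, hMsymm]
  have hMinvHerm : (M⁻¹)ᴴ = M⁻¹ := by
    simpa [conjTranspose_eq_transpose_of_trivial] using hMinvSymm
  -- rewrite the trace
  have htr : Matrix.trace ((M⁻¹ * Xᵀ)ᵀ * (M⁻¹ * Xᵀ)) =
      Matrix.trace (M⁻¹ * (Xᵀ * X) * M⁻¹) := by
    have e1 : (M⁻¹ * Xᵀ)ᵀ * (M⁻¹ * Xᵀ) = X * (M⁻¹ * M⁻¹) * Xᵀ := by
      rw [transpose_mul, hMinvSymm, transpose_transpose]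
      simp [Matrix.mul_assoc]
    rw [e1, trace_mul_cycle X (M⁻¹ * M⁻¹) Xᵀ,
      trace_mul_cycle M⁻¹ (Xᵀ * X) M⁻¹, trace_mul_comm]
  -- step 1 : trace (M⁻¹ XᵀX M⁻¹) ≤ trace M⁻¹
  have step1 : Matrix.trace (M⁻¹ * (Xᵀ * X) * M⁻¹) ≤ Matrix.trace M⁻¹ := by
    have hdiff : (M⁻¹ - M⁻¹ * (Xᵀ * X) * M⁻¹).PosSemidef := by
      have h0 : M⁻¹ * M * M⁻¹ = M⁻¹ := by rw [hMinv, Matrix.one_mul]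
      have heq : M⁻¹ - M⁻¹ * (Xᵀ * X) * M⁻¹ = M⁻¹ * E * (M⁻¹)ᴴ := by
        rw [hMinvHerm]
        calc M⁻¹ - M⁻¹ * (Xᵀ * X) * M⁻¹
            = M⁻¹ * M * M⁻¹ - M⁻¹ * (Xᵀ * X) * M⁻¹ := by rw [h0]
          _ = M⁻¹ * (M - Xᵀ * X) * M⁻¹ := by noncomm_ring
          _ = M⁻¹ * E * M⁻¹ := by rw [hMdef, add_sub_cancel_left]
      rw [heq]
      exact hEpos.posSemidef.mul_mul_conjTranspose_same M⁻¹
    have := psd_trace_nonneg hdiff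
    rw [trace_sub] at this
    linarith
  -- step 2 : trace M⁻¹ ≤ d / c
  have step2 : Matrix.trace M⁻¹ ≤ (d : ℝ) / c := by
    set D : Matrix (Fin d) (Fin d) ℝ := M - c • 1 with hDdef
    have hD : D.PosSemidef := by
      have : D = Xᵀ * X + (E - c • 1) := by rw [hDdef, hMdef, add_sub_assoc]
      rw [this]; exact hXX.add hE
    have hDsymm : Dᵀ = D := by
      rw [hDdef, transpose_sub, hMsymm, transpose_smul, transpose_one]
    have hDD : (D * D).PosSemidef := by
      have := posSemidef_conjTranspose_mul_self D
      simpa [conjTranspose_eq_transpose_of_trivial, hDsymm] using this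
    have hP : (c⁻¹ • (D * D) + D).PosSemidef :=
      (psd_smul hDD (by positivity)).add hD
    have hexp : c⁻¹ • (D * D) + D = c⁻¹ • (M * M) - M := by
      have hDD2 : D * D = M * M - c • M - c • M + (c * c) • 1 := by
        rw [hDdef]
        rw [Matrix.sub_mul, Matrix.mul_sub, Matrix.mul_sub]
        simp only [Matrix.smul_mul, Matrix.mul_smul, smul_smul, Matrix.one_mul,
          Matrix.mul_one]
        abel
      have h1 : c⁻¹ • (c • M) = M := by
        rw [smul_smul, inv_mul_cancel₀ hc0, one_smul]
      have h2 : c⁻¹ • ((c * c) • (1 : Matrix (Fin d) (Fin d) ℝ)) = c • 1 := by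
        rw [smul_smul]
        congr 1
        field_simp
      rw [hDD2, hDdef, smul_add, smul_sub, smul_sub, h1, h2]
      abel
    have hkey : c⁻¹ • (1 : Matrix (Fin d) (Fin d) ℝ) - M⁻¹ =
        M⁻¹ * (c⁻¹ • (D * D) + D) * (M⁻¹)ᴴ := by
      rw [hMinvHerm, hexp]
      rw [Matrix.mul_sub, Matrix.sub_mul, Matrix.mul_smul, Matrix.smul_mul]
      have h1 : M⁻¹ * (M * M) * M⁻¹ = 1 := by
        rw [← Matrix.mul_assoc M⁻¹ M M, hMinv, Matrix.one_mul, hMinv']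
      have h2 : M⁻¹ * M * M⁻¹ = M⁻¹ := by rw [hMinv, Matrix.one_mul]
      rw [h1, h2]
    have hN : (c⁻¹ • (1 : Matrix (Fin d) (Fin d) ℝ) - M⁻¹).PosSemidef := by
      rw [hkey]
      exact hP.mul_mul_conjTranspose_same M⁻¹
    have hh := psd_trace_nonneg hN
    rw [trace_sub, trace_smul, trace_one] at hh
    have hcard : (Fintype.card (Fin d) : ℝ) = (d : ℝ) := by simp
    rw [div_eq_inv_mul]
    have : c⁻¹ * (d : ℝ) - Matrix.trace M⁻¹ ≥ 0 := by
      simpa [hcard, smul_eq_mul] using hh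
    linarith
  calc Matrix.trace ((M⁻¹ * Xᵀ)ᵀ * (M⁻¹ * Xᵀ))
      = Matrix.trace (M⁻¹ * (Xᵀ * X) * M⁻¹) := htr
    _ ≤ Matrix.trace M⁻¹ := step1
    _ ≤ (d : ℝ) / c := step2
end

section
/- Let c > 0 and let E be a real symmetric d × d matrix such that E − c·I_d is positive semidefinite. Then for all real n × d matrices X and X′, |log det(X′ᵀX′ + E) − log det(XᵀX + E)| ≤ √(d/c) · ‖X′ − X‖_F; that is, X ↦ log det(XᵀX + E) is Lipschitz with constant √(d/c) with respect to the Frobenius norm. -/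
open Matrix Finset

/-- Jacobi-style derivative of a determinant of a matrix-valued function. -/
lemma hasDerivAt_det_aux {k : ℕ} {M : ℝ → Matrix (Fin k) (Fin k) ℝ}
    {M' : Matrix (Fin k) (Fin k) ℝ} {t : ℝ}
    (h : ∀ i j, HasDerivAt (fun s => M s i j) (M' i j) t) :
    HasDerivAt (fun s => (M s).det)
      (∑ i, ((M t).updateCol i (fun r => M' r i)).det) t := by
  have key : ∀ σ : Equiv.Perm (Fin k),
      HasDerivAt (fun s => ∏ i, M s (σ i) i)
        (∑ i, (∏ j ∈ univ.erase i, M t (σ j) j) * M' (σ i) i) t := by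
    intro σ
    have := HasDerivAt.fun_finsetProd (u := univ) (f := fun i s => M s (σ i) i)
      (f' := fun i => M' (σ i) i) (x := t) (fun i _ => h (σ i) i)
    simpa [smul_eq_mul] using this
  have main : HasDerivAt (fun s => (M s).det)
      (∑ σ : Equiv.Perm (Fin k), ((Equiv.Perm.sign σ : ℤ) : ℝ) *
        ∑ i, (∏ j ∈ univ.erase i, M t (σ j) j) * M' (σ i) i) t := by
    simp_rw [Matrix.det_apply']
    exact HasDerivAt.fun_sum fun σ _ => (key σ).const_mul _
  convert main using 1
  have upd : ∀ (i : Fin k) (σ : Equiv.Perm (Fin k)),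
      (∏ j, ((M t).updateCol i fun r => M' r i) (σ j) j)
        = M' (σ i) i * ∏ j ∈ univ.erase i, M t (σ j) j := by
    intro i σ
    rw [← Finset.mul_prod_erase univ _ (mem_univ i)]
    congr 1
    · simp [Matrix.updateCol_apply]
    · exact Finset.prod_congr rfl fun j hj => by
        simp [Matrix.updateCol_apply, (Finset.mem_erase.1 hj).1]
  simp_rw [Matrix.det_apply', upd]
  rw [Finset.sum_comm]
  refine Finset.sum_congr rfl fun σ _ => ?_
  rw [Finset.mul_sum]
  exact Finset.sum_congr rfl fun i _ => by ring

lemma trace_nonneg_of_posSemidef {k : ℕ} {A : Matrix (Fin k) (Fin k) ℝ}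
    (h : A.PosSemidef) : 0 ≤ Matrix.trace A := by
  refine Finset.sum_nonneg fun i _ => ?_
  have := h.dotProduct_mulVec_nonneg (Pi.single i 1)
  simpa [dotProduct, Matrix.mulVec, Pi.single_apply, Matrix.diag] using this

lemma posSemidef_smul_real {k : ℕ} {A : Matrix (Fin k) (Fin k) ℝ} (h : A.PosSemidef)
    {r : ℝ} (hr : 0 ≤ r) : (r • A).PosSemidef := by
  refine Matrix.PosSemidef.of_dotProduct_mulVec_nonneg ?_ fun x => ?_
  · unfold Matrix.IsHermitian
    simp [Matrix.conjTranspose_smul, ← Matrix.conjTranspose_eq_transpose_of_trivial, h.1.eq]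
  · have := h.dotProduct_mulVec_nonneg x
    rw [Matrix.smul_mulVec, dotProduct_smul]
    exact mul_nonneg hr this |>.trans_eq (by simp)

lemma trace_cauchy_schwarz {n d : ℕ} (B C : Matrix (Fin n) (Fin d) ℝ) :
    (Matrix.trace (Bᵀ * C))^2 ≤ Matrix.trace (Bᵀ * B) * Matrix.trace (Cᵀ * C) := by
  have h1 : Matrix.trace (Bᵀ * C) = ∑ p : Fin d × Fin n, B p.2 p.1 * C p.2 p.1 := by
    rw [Fintype.sum_prod_type]
    simp [Matrix.trace, Matrix.mul_apply, Matrix.diag]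
  have h2 : Matrix.trace (Bᵀ * B) = ∑ p : Fin d × Fin n, (B p.2 p.1)^2 := by
    rw [Fintype.sum_prod_type]
    simp [Matrix.trace, Matrix.mul_apply, Matrix.diag, sq]
  have h3 : Matrix.trace (Cᵀ * C) = ∑ p : Fin d × Fin n, (C p.2 p.1)^2 := by
    rw [Fintype.sum_prod_type]
    simp [Matrix.trace, Matrix.mul_apply, Matrix.diag, sq]
  rw [h1, h2, h3]
  exact Finset.sum_mul_sq_le_sq_mul_sq _ _ _

lemma trace_posSemidef_transpose_mul_self {n d : ℕ} (B : Matrix (Fin n) (Fin d) ℝ) :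
    (Bᵀ * B).PosSemidef := by
  have := Matrix.posSemidef_conjTranspose_mul_self B
  rwa [Matrix.conjTranspose_eq_transpose_of_trivial] at this

lemma key_bound {n d : ℕ} {c : ℝ} (hc : 0 < c) {E : Matrix (Fin d) (Fin d) ℝ}
    (hE : (E - c • (1 : Matrix (Fin d) (Fin d) ℝ)).PosSemidef) (hEpd : E.PosDef)
    (Y Δ : Matrix (Fin n) (Fin d) ℝ) :
    |Matrix.trace ((Yᵀ * Y + E)⁻¹ * (Δᵀ * Y + Yᵀ * Δ))| ≤
      Real.sqrt ((d : ℝ) / c) * Real.sqrt (Matrix.trace (Δᵀ * Δ)) := by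
  set A := Yᵀ * Y + E with hA
  have hApd : A.PosDef := Matrix.PosDef.posSemidef_add (trace_posSemidef_transpose_mul_self Y) hEpd
  have hPpd : A⁻¹.PosDef := hApd.inv
  have hdet : IsUnit A.det := hApd.det_pos.ne'.isUnit
  have hPA : A⁻¹ * A = 1 := Matrix.nonsing_inv_mul A hdet
  have hAP : A * A⁻¹ = 1 := Matrix.mul_nonsing_inv A hdet
  have hPsymm : A⁻¹ᵀ = A⁻¹ := by
    rw [← Matrix.conjTranspose_eq_transpose_of_trivial, hPpd.isHermitian.eq]
  have hAsymm : Aᵀ = A := by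
    rw [← Matrix.conjTranspose_eq_transpose_of_trivial, hApd.isHermitian.eq]
  set P := A⁻¹ with hP
  -- rewrite the trace
  have h2 : Matrix.trace (P * (Δᵀ * Y + Yᵀ * Δ)) = 2 * Matrix.trace ((Y * P)ᵀ * Δ) := by
    have e0 : (Y * P)ᵀ * Δ = P * (Yᵀ * Δ) := by
      rw [Matrix.transpose_mul, hPsymm, Matrix.mul_assoc]
    have e1 : Matrix.trace (P * (Δᵀ * Y)) = Matrix.trace (P * (Yᵀ * Δ)) := by
      conv_lhs => rw [← Matrix.trace_transpose]
      rw [Matrix.transpose_mul, Matrix.transpose_mul, Matrix.transpose_transpose, hPsymm,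
        Matrix.trace_mul_comm]
    rw [Matrix.mul_add, Matrix.trace_add, e1, e0]
    ring
  -- trace bound on (Y*P)ᵀ*(Y*P)
  have eG : (Y * P)ᵀ * (Y * P) = P * (Yᵀ * Y) * P := by
    rw [Matrix.transpose_mul, hPsymm]
    simp [Matrix.mul_assoc]
  have hYYA : Yᵀ * Y = A - E := by rw [hA, add_sub_cancel_right]
  have hPS : P * (A - (2*c) • 1) = 1 - (2*c) • P := by
    rw [Matrix.mul_sub, hPA, Matrix.mul_smul, Matrix.mul_one]
  have hSP : (A - (2*c) • 1) * P = 1 - (2*c) • P := by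
    rw [Matrix.sub_mul, hAP, Matrix.smul_mul, Matrix.one_mul]
  have hid : (1 : Matrix (Fin d) (Fin d) ℝ) - (4*c) • (P * (Yᵀ * Y) * P)
      = P * ((A - (2*c) • 1) * (A - (2*c) • 1) + (4*c) • (E - c • 1)) * P := by
    have expand : P * ((A - (2*c) • 1) * (A - (2*c) • 1) + (4*c) • (E - c • 1)) * P
        = (P * (A - (2*c) • 1)) * ((A - (2*c) • 1) * P)
          + (4*c) • (P * E * P) - (4*c*c) • (P * P) := by
      simp only [Matrix.mul_add, Matrix.add_mul, Matrix.mul_sub, Matrix.sub_mul,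
        Matrix.mul_smul, Matrix.smul_mul, Matrix.mul_one, Matrix.one_mul,
        Matrix.mul_assoc, smul_smul]
      module
    have expand2 : P * (A - E) * P = P - P * E * P := by
      rw [Matrix.mul_sub, Matrix.sub_mul, hPA, Matrix.one_mul]
    rw [expand, hPS, hSP, hYYA, expand2]
    simp only [Matrix.mul_sub, Matrix.sub_mul, Matrix.smul_mul, Matrix.mul_smul,
      Matrix.one_mul, Matrix.mul_one, smul_smul, smul_sub]
    module
  have hSsymm : (A - (2*c) • 1)ᵀ = A - (2*c) • 1 := by
    rw [Matrix.transpose_sub, hAsymm, Matrix.transpose_smul, Matrix.transpose_one]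
  have hpsd1 : ((A - (2*c) • 1) * (A - (2*c) • 1)).PosSemidef := by
    have := trace_posSemidef_transpose_mul_self (A - (2*c) • 1)
    rwa [hSsymm] at this
  have hpsd2 : ((4*c) • (E - c • 1)).PosSemidef := posSemidef_smul_real hE (by positivity)
  have hconj : (P * ((A - (2*c) • 1) * (A - (2*c) • 1) + (4*c) • (E - c • 1)) * P).PosSemidef := by
    have := (hpsd1.add hpsd2).conjTranspose_mul_mul_same P
    rwa [hPpd.isHermitian.eq] at this
  have htr : 0 ≤ Matrix.trace ((1 : Matrix (Fin d) (Fin d) ℝ) - (4*c) • (P * (Yᵀ * Y) * P)) := by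
    rw [hid]; exact trace_nonneg_of_posSemidef hconj
  rw [Matrix.trace_sub, Matrix.trace_smul, Matrix.trace_one] at htr
  have hGb : Matrix.trace ((Y * P)ᵀ * (Y * P)) ≤ (d : ℝ) / (4*c) := by
    rw [eG, le_div_iff₀ (by positivity)]
    rw [Fintype.card_fin] at htr
    simp only [smul_eq_mul] at htr
    nlinarith [htr]
  -- Cauchy-Schwarz
  have tB0 : 0 ≤ Matrix.trace ((Y * P)ᵀ * (Y * P)) :=
    trace_nonneg_of_posSemidef (trace_posSemidef_transpose_mul_self _)
  have tΔ0 : 0 ≤ Matrix.trace (Δᵀ * Δ) :=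
    trace_nonneg_of_posSemidef (trace_posSemidef_transpose_mul_self _)
  have hcs : |Matrix.trace ((Y * P)ᵀ * Δ)| ≤
      Real.sqrt (Matrix.trace ((Y * P)ᵀ * (Y * P))) * Real.sqrt (Matrix.trace (Δᵀ * Δ)) := by
    rw [← Real.sqrt_sq_eq_abs, ← Real.sqrt_mul tB0]
    exact Real.sqrt_le_sqrt (trace_cauchy_schwarz _ _)
  have hsqrt : Real.sqrt (Matrix.trace ((Y * P)ᵀ * (Y * P))) ≤ Real.sqrt ((d : ℝ) / (4*c)) :=
    Real.sqrt_le_sqrt hGb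
  have htwo : 2 * Real.sqrt ((d : ℝ) / (4*c)) = Real.sqrt ((d : ℝ) / c) := by
    rw [show (d : ℝ) / c = 4 * ((d : ℝ) / (4*c)) by field_simp,
      Real.sqrt_mul (by norm_num), show Real.sqrt 4 = 2 by
        rw [show (4:ℝ) = 2^2 by norm_num, Real.sqrt_sq (by norm_num)]]
  calc |Matrix.trace (P * (Δᵀ * Y + Yᵀ * Δ))|
      = 2 * |Matrix.trace ((Y * P)ᵀ * Δ)| := by rw [h2, abs_mul]; norm_num
    _ ≤ 2 * (Real.sqrt (Matrix.trace ((Y * P)ᵀ * (Y * P))) * Real.sqrt (Matrix.trace (Δᵀ * Δ))) := by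
        linarith
    _ ≤ 2 * (Real.sqrt ((d : ℝ) / (4*c)) * Real.sqrt (Matrix.trace (Δᵀ * Δ))) := by
        have := mul_le_mul_of_nonneg_right hsqrt (Real.sqrt_nonneg (Matrix.trace (Δᵀ * Δ)))
        linarith
    _ = Real.sqrt ((d : ℝ) / c) * Real.sqrt (Matrix.trace (Δᵀ * Δ)) := by
        rw [← htwo]; ring
lemma sum_det_updateColumn_eq_trace {k : ℕ} (A B : Matrix (Fin k) (Fin k) ℝ) :
    ∑ i, (A.updateCol i fun r => B r i).det = Matrix.trace (A.adjugate * B) := by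
  simp_rw [← Matrix.cramer_apply, Matrix.cramer_eq_adjugate_mulVec]
  simp [Matrix.trace, Matrix.mulVec, Matrix.mul_apply, Matrix.diag, dotProduct]


lemma hasDerivAt_logdet {n d : ℕ} (X Δ : Matrix (Fin n) (Fin d) ℝ)
    (E : Matrix (Fin d) (Fin d) ℝ) (t : ℝ)
    (hdetpos : 0 < ((X + t • Δ)ᵀ * (X + t • Δ) + E).det) :
    HasDerivAt (fun s : ℝ => Real.log (((X + s • Δ)ᵀ * (X + s • Δ) + E).det))
      (Matrix.trace (((X + t • Δ)ᵀ * (X + t • Δ) + E)⁻¹ *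
        (Δᵀ * (X + t • Δ) + (X + t • Δ)ᵀ * Δ))) t := by
  set Y := X + t • Δ with hY
  have hEntry : ∀ i j, HasDerivAt (fun s : ℝ => ((X + s • Δ)ᵀ * (X + s • Δ) + E) i j)
      ((Δᵀ * Y + Yᵀ * Δ) i j) t := by
    intro i j
    have hfun : (fun s : ℝ => ((X + s • Δ)ᵀ * (X + s • Δ) + E) i j)
        = fun s => (∑ kk, (X kk i + s * Δ kk i) * (X kk j + s * Δ kk j)) + E i j := by
      funext s
      simp [Matrix.mul_apply, Matrix.add_apply, Matrix.transpose_apply, Matrix.smul_apply]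
    rw [hfun]
    have hsum : HasDerivAt (fun s : ℝ => ∑ kk, (X kk i + s * Δ kk i) * (X kk j + s * Δ kk j))
        (∑ kk, (Δ kk i * (X kk j + t * Δ kk j) + (X kk i + t * Δ kk i) * Δ kk j)) t := by
      apply HasDerivAt.fun_sum
      intro kk _
      exact ((hasDerivAt_mul_const (Δ kk i)).const_add (X kk i)).mul
            ((hasDerivAt_mul_const (Δ kk j)).const_add (X kk j))
    have := hsum.add_const (E i j)
    refine this.congr_deriv ?_
    simp [hY, Matrix.mul_apply, Matrix.add_apply, Matrix.transpose_apply, Matrix.smul_apply,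
      Finset.sum_add_distrib]
  have hdet := hasDerivAt_det_aux hEntry
  rw [sum_det_updateColumn_eq_trace] at hdet
  have hlog := hdet.log hdetpos.ne'
  convert hlog using 1
  rw [Matrix.inv_def, Ring.inverse_eq_inv', Matrix.smul_mul, Matrix.trace_smul]
  simp [div_eq_inv_mul, ← Matrix.transpose_smul, ← Matrix.transpose_add, ← hY]

/-- Lipschitz estimate for the log-determinant statistic: if `E` is symmetric with
`E - c I` positive semidefinite (`c > 0`), then `X ↦ log det (XᵀX + E)` is Lipschitz
with constant `√(d/c)` with respect to the Frobenius norm `‖A‖_F = √(trace (Aᵀ A))`. -/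
theorem logdet_lipschitz {n d : ℕ} (c : ℝ) (hc : 0 < c)
    (E : Matrix (Fin d) (Fin d) ℝ) (hEsymm : E.IsSymm)
    (hE : (E - c • (1 : Matrix (Fin d) (Fin d) ℝ)).PosSemidef)
    (X X' : Matrix (Fin n) (Fin d) ℝ) :
    |Real.log ((X'ᵀ * X' + E).det) - Real.log ((Xᵀ * X + E).det)| ≤
      Real.sqrt ((d : ℝ) / c) * Real.sqrt (Matrix.trace ((X' - X)ᵀ * (X' - X))) := by
  set Δ := X' - X with hΔ
  have hc1 : (c • (1 : Matrix (Fin d) (Fin d) ℝ)).PosDef := by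
    rw [Matrix.smul_one_eq_diagonal]
    exact Matrix.posDef_diagonal_iff.mpr fun _ => hc
  have hEpd : E.PosDef := by
    have := Matrix.PosDef.posSemidef_add hE hc1
    simpa using this
  have hdetpos : ∀ t : ℝ, 0 < ((X + t • Δ)ᵀ * (X + t • Δ) + E).det := fun t =>
    (Matrix.PosDef.posSemidef_add (trace_posSemidef_transpose_mul_self _) hEpd).det_pos
  set f : ℝ → ℝ := fun s => Real.log (((X + s • Δ)ᵀ * (X + s • Δ) + E).det) with hf
  set φ : ℝ → ℝ := fun t => Matrix.trace (((X + t • Δ)ᵀ * (X + t • Δ) + E)⁻¹ *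
      (Δᵀ * (X + t • Δ) + (X + t • Δ)ᵀ * Δ)) with hφ
  have hmvt := norm_image_sub_le_of_norm_deriv_le_segment_01'
    (f := f) (f' := φ) (C := Real.sqrt ((d : ℝ) / c) * Real.sqrt (Matrix.trace (Δᵀ * Δ)))
    (fun x _ => (hasDerivAt_logdet X Δ E x (hdetpos x)).hasDerivWithinAt)
    (fun x _ => by
      rw [Real.norm_eq_abs]
      exact key_bound hc hE hEpd (X + x • Δ) Δ)
  have h1 : X + (1 : ℝ) • Δ = X' := by rw [one_smul, hΔ]; abel
  have h0 : X + (0 : ℝ) • Δ = X := by simp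
  have e1 : f 1 = Real.log ((X'ᵀ * X' + E).det) := by rw [hf]; simp only; rw [h1]
  have e0 : f 0 = Real.log ((Xᵀ * X + E).det) := by rw [hf]; simp only; rw [h0]
  rw [Real.norm_eq_abs, e1, e0] at hmvt
  exact hmvt
end

section
/- Let Δ > 0 and ε > 0. For a ∈ ℝ let μ_a be the measure on ℝ with density x ↦ (ε/(2Δ))·exp(−ε·|x − a|/Δ) with respect to Lebesgue measure (the Laplace distribution with location a and scale Δ/ε). Then for all a, a′ ∈ ℝ with |a − a′| ≤ Δ and every Borel measurable set S ⊆ ℝ, μ_a(S) ≤ exp(ε)·μ_{a′}(S). -/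
/-! Moving the centre of a Laplace density by at most `Δ` changes the exponent `-ε |x - a| / Δ`
by at most `ε` (triangle inequality), so the density centred at `a` is pointwise at most `exp ε`
times the density centred at `a'`; integrating this pointwise bound over any set gives the
claim. -/

open MeasureTheory
open scoped ENNReal

/-- The measure on `ℝ` of the Laplace distribution with location `a` and scale `Δ/ε`:
its density with respect to Lebesgue measure is `x ↦ (ε/(2Δ)) exp (-ε |x - a| / Δ)`. -/
noncomputable def laplaceMeasure (Δ ε a : ℝ) : Measure ℝ :=
  volume.withDensity fun x => ENNReal.ofReal ((ε / (2 * Δ)) * Real.exp (-(ε * |x - a|) / Δ))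

theorem MeasureTheory.Measure.withDensity_le_smul_withDensity {α : Type*} [MeasurableSpace α]
    {μ : Measure α} {f g : α → ℝ≥0∞} {c : ℝ≥0∞} (hc : c ≠ ∞) (hfg : ∀ x, f x ≤ c * g x) :
    μ.withDensity f ≤ c • μ.withDensity g := by
  rw [← withDensity_smul' c g hc]
  exact withDensity_mono (Filter.Eventually.of_forall hfg)

theorem exp_neg_mul_abs_sub_div_le {Δ ε a a' : ℝ} (hΔ : 0 < Δ) (hε : 0 ≤ ε)
    (ha : |a - a'| ≤ Δ) (x : ℝ) :
    Real.exp (-(ε * |x - a|) / Δ) ≤ Real.exp ε * Real.exp (-(ε * |x - a'|) / Δ) := by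
  rw [← Real.exp_add, Real.exp_le_exp, add_div' _ _ _ hΔ.ne', div_le_div_iff_of_pos_right hΔ]
  have htri : |x - a'| ≤ |x - a| + |a - a'| := abs_sub_le x a a'
  nlinarith [mul_le_mul_of_nonneg_left htri hε, mul_le_mul_of_nonneg_left ha hε]

theorem laplaceMeasure_le_exp_smul {Δ ε a a' : ℝ} (hΔ : 0 < Δ) (hε : 0 ≤ ε)
    (ha : |a - a'| ≤ Δ) :
    laplaceMeasure Δ ε a ≤ ENNReal.ofReal (Real.exp ε) • laplaceMeasure Δ ε a' := by
  refine Measure.withDensity_le_smul_withDensity ENNReal.ofReal_ne_top fun x => ?_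
  rw [← ENNReal.ofReal_mul (Real.exp_nonneg _), mul_left_comm]
  gcongr
  exact exp_neg_mul_abs_sub_div_le hΔ hε ha x

theorem laplace_mechanism_dp_general (Δ ε : ℝ) (hΔ : 0 < Δ) (hε : 0 < ε)
    (a a' : ℝ) (ha : |a - a'| ≤ Δ) (S : Set ℝ) :
    laplaceMeasure Δ ε a S ≤ ENNReal.ofReal (Real.exp ε) * laplaceMeasure Δ ε a' S :=
  laplaceMeasure_le_exp_smul hΔ hε.le ha S

/-- ε-differential privacy of the Laplace mechanism: if `|a - a'| ≤ Δ` then for every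
Borel set `S`, the Laplace measure centred at `a` assigns `S` at most `exp ε` times
the mass assigned by the Laplace measure centred at `a'`. -/
theorem laplace_mechanism_dp (Δ ε : ℝ) (hΔ : 0 < Δ) (hε : 0 < ε)
    (a a' : ℝ) (ha : |a - a'| ≤ Δ) (S : Set ℝ) (hS : MeasurableSet S) :
    laplaceMeasure Δ ε a S ≤ ENNReal.ofReal (Real.exp ε) * laplaceMeasure Δ ε a' S :=
  laplace_mechanism_dp_general Δ ε hΔ hε a a' ha S
end
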